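/- arXiv:1706.05550 — 2 statements merged into one kernel-verified Lean document; each statement's English description precedes it below -/
import Mathlib

section
/- For the path P_5 on 5 vertices, dim_f^4(P_5) = 5; in particular dim_f^4(P_5) = 5 > 4 = 4·dim_f(P_5), so the inequality dim_f^k(G) ≥ k·dim_f(G) can be strict. -/
open Finset

namespace FracDim

variable {V : Type*}

/-- `R{x,y}`: the set of vertices `z` with `d(x,z) ≠ d(y,z)`. -/
noncomputable def resSet [Fintype V] (G : SimpleGraph V) (x y : V) : Finset V :=
  Finset.univ.filter (fun z => G.dist x z ≠ G.dist y z)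

/-- `κ(G) = min { |R{x,y}| : x ≠ y }`. -/
noncomputable def kappa [Fintype V] (G : SimpleGraph V) : ℕ :=
  sInf {n : ℕ | ∃ x y : V, x ≠ y ∧ (resSet G x y).card = n}

/-- A `k`-resolving function: `g : V → [0,1]` with `g(R{x,y}) ≥ k` for all distinct `x, y`. -/
def IsKResolving [Fintype V] (G : SimpleGraph V) (k : ℝ) (g : V → ℝ) : Prop :=
  (∀ v, 0 ≤ g v ∧ g v ≤ 1) ∧
    ∀ x y : V, x ≠ y → k ≤ ∑ z ∈ resSet G x y, g z

/-- The fractional `k`-metric dimension of `G`. -/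
noncomputable def fracKDim [Fintype V] (G : SimpleGraph V) (k : ℝ) : ℝ :=
  sInf {s : ℝ | ∃ g : V → ℝ, IsKResolving G k g ∧ s = ∑ v, g v}

/-- The fractional metric dimension of `G`. -/
noncomputable def fracDim [Fintype V] (G : SimpleGraph V) : ℝ :=
  fracKDim G 1

end FracDim

/-!
On the path `P_n` the distance is `|u - v|`, so `d(x,z) = d(y,z)` with `x ≠ y` forces `z` to be
the midpoint of `x` and `y`: every `R{x,y}` misses at most one vertex, and the constant function `1`
is `(n-1)`-resolving. Conversely `R{m-1, m+1} = V ∖ {m}` has exactly `n - 1` elements, so an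
`(n-1)`-resolving function must be `1` on it; for `n ≥ 4` every vertex lies in such a set, whence
`dim_f^{n-1}(P_n) = n`. An endpoint alone resolves every pair, so `dim_f(P_n) = 1`.
-/

namespace SimpleGraph

variable {n : ℕ}

lemma dist_le_length_of_walk_pathGraph {u v : Fin n} (p : (pathGraph n).Walk u v) :
    Nat.dist u v ≤ p.length := by
  induction p with
  | nil => simp [Nat.dist]
  | cons h p ih =>
    rw [pathGraph_adj] at h
    simp only [Walk.length_cons, Nat.dist] at ih ⊢
    omega

lemma dist_pathGraph_le_of_add_eq (k : ℕ) {u v : Fin n} (h : u.val + k = v.val) :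
    (pathGraph n).dist u v ≤ k := by
  induction k generalizing u with
  | zero => simp [Fin.ext (by simpa using h)]
  | succ k ih =>
    let w : Fin n := ⟨u + 1, by omega⟩
    have huw : (pathGraph n).Adj u w := pathGraph_adj.mpr (Or.inl rfl)
    calc (pathGraph n).dist u v ≤ (pathGraph n).dist u w + (pathGraph n).dist w v :=
          huw.reachable.dist_triangle_left v
      _ ≤ 1 + k := add_le_add (dist_eq_one_iff_adj.mpr huw).le (ih (by simp only [w]; omega))
      _ = k + 1 := add_comm 1 k

theorem dist_pathGraph (u v : Fin n) : (pathGraph n).dist u v = Nat.dist u v := by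
  refine le_antisymm ?_ ?_
  · rcases le_total u v with huv | hvu
    · exact dist_pathGraph_le_of_add_eq _ (by rw [Nat.dist_eq_sub_of_le huv]; omega)
    · rw [dist_comm, Nat.dist_comm]
      exact dist_pathGraph_le_of_add_eq _ (by rw [Nat.dist_eq_sub_of_le hvu]; omega)
  · obtain ⟨p, hp⟩ := (pathGraph_preconnected n u v).exists_walk_length_eq_dist
    exact hp ▸ dist_le_length_of_walk_pathGraph p

end SimpleGraph

namespace FracDim

open SimpleGraph

section General

variable {V : Type*} [Fintype V] {G : SimpleGraph V} {k : ℝ} {g : V → ℝ}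

theorem isKResolving_one (h : ∀ x y : V, x ≠ y → k ≤ #(resSet G x y)) :
    IsKResolving G k 1 :=
  ⟨fun _ => by simp, fun x y hxy => by simpa using h x y hxy⟩

theorem IsKResolving.le_sum [Nontrivial V] (hg : IsKResolving G k g) : k ≤ ∑ v, g v := by
  obtain ⟨x, y, hxy⟩ := exists_pair_ne V
  exact (hg.2 x y hxy).trans
    (sum_le_sum_of_subset_of_nonneg (subset_univ _) fun v _ _ => (hg.1 v).1)

theorem IsKResolving.eq_one_of_card_resSet_le (hg : IsKResolving G k g) {x y z : V}
    (hxy : x ≠ y) (hcard : (#(resSet G x y) : ℝ) ≤ k) (hz : z ∈ resSet G x y) : g z = 1 := by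
  have hsum : ∑ v ∈ resSet G x y, g v = ∑ v ∈ resSet G x y, 1 := by
    refine le_antisymm (sum_le_sum fun v _ => (hg.1 v).2) ?_
    simpa using hcard.trans (hg.2 x y hxy)
  exact (sum_eq_sum_iff_of_le fun v _ => (hg.1 v).2).mp hsum z hz

theorem IsKResolving.fracKDim_le (hg : IsKResolving G k g) : fracKDim G k ≤ ∑ v, g v := by
  refine csInf_le ⟨0, ?_⟩ ⟨g, hg, rfl⟩
  rintro _ ⟨g', hg', rfl⟩
  exact sum_nonneg fun v _ => (hg'.1 v).1

theorem IsKResolving.fracKDim_eq (hg : IsKResolving G k g)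
    (hmin : ∀ g', IsKResolving G k g' → ∑ v, g v ≤ ∑ v, g' v) : fracKDim G k = ∑ v, g v := by
  refine le_antisymm hg.fracKDim_le (le_csInf ⟨_, g, hg, rfl⟩ ?_)
  rintro _ ⟨g', hg', rfl⟩
  exact hmin g' hg'

end General

section Path

variable {n : ℕ}

lemma mem_resSet_pathGraph {x y z : Fin n} :
    z ∈ resSet (pathGraph n) x y ↔ Nat.dist x z ≠ Nat.dist y z := by
  simp [resSet, dist_pathGraph]

theorem card_resSet_pathGraph {x y : Fin n} (hxy : x ≠ y) :
    n - 1 ≤ #(resSet (pathGraph n) x y) := by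
  have hcompl : #(resSet (pathGraph n) x y)ᶜ ≤ 1 := by
    refine card_le_one.mpr fun a ha b hb => ?_
    simp only [mem_compl, mem_resSet_pathGraph, not_not, Nat.dist] at ha hb
    have := Fin.val_ne_of_ne hxy
    omega
  rw [card_compl, Fintype.card_fin] at hcompl
  omega

theorem resSet_pathGraph_eq_erase {x m y : Fin n} (hxm : x.val + 1 = m) (hmy : m.val + 1 = y) :
    resSet (pathGraph n) x y = univ.erase m := by
  ext z
  simp only [mem_resSet_pathGraph, mem_erase, mem_univ, and_true, Nat.dist, ne_eq, Fin.ext_iff]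
  omega

theorem IsKResolving.eq_one_pathGraph (hn : 4 ≤ n) {g : Fin n → ℝ}
    (hg : IsKResolving (pathGraph n) (n - 1) g) (z : Fin n) : g z = 1 := by
  obtain ⟨m, hm1, hmn, hmz⟩ : ∃ m, 1 ≤ m ∧ m + 1 < n ∧ m ≠ z.val :=
    ⟨if z.val = 1 then 2 else 1, by split_ifs <;> omega⟩
  let x : Fin n := ⟨m - 1, by omega⟩
  let y : Fin n := ⟨m + 1, hmn⟩
  have hR : resSet (pathGraph n) x y = univ.erase ⟨m, by omega⟩ :=
    resSet_pathGraph_eq_erase (by simp only [x]; omega) rfl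
  refine hg.eq_one_of_card_resSet_le (x := x) (y := y) (by simp [x, y, Fin.ext_iff]) ?_ ?_
  · rw [hR, card_erase_of_mem (mem_univ _), card_univ, Fintype.card_fin,
      Nat.cast_sub (by omega), Nat.cast_one]
  · simp [hR, Fin.ext_iff, Ne.symm hmz]

theorem fracKDim_pathGraph (hn : 4 ≤ n) : fracKDim (pathGraph n) (n - 1) = n := by
  have hone : IsKResolving (pathGraph n) (n - 1) 1 := isKResolving_one fun x y hxy => by
    have := card_resSet_pathGraph hxy
    rw [sub_le_iff_le_add]
    exact_mod_cast (by omega : n ≤ #(resSet (pathGraph n) x y) + 1)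
  rw [hone.fracKDim_eq fun g hg => sum_le_sum fun v _ => (hg.eq_one_pathGraph hn v).ge]
  simp

theorem fracDim_pathGraph (hn : 2 ≤ n) : fracDim (pathGraph n) = 1 := by
  have : Nontrivial (Fin n) := Fin.nontrivial_iff_two_le.mpr hn
  let v₀ : Fin n := ⟨0, by omega⟩
  have hres : IsKResolving (pathGraph n) 1 (Pi.single v₀ 1) := by
    refine ⟨fun v => ?_, fun x y hxy => ?_⟩
    · by_cases hv : v = v₀ <;> simp [hv]
    · have hv₀ : v₀ ∈ resSet (pathGraph n) x y := by
        simpa [mem_resSet_pathGraph, v₀, Nat.dist, Fin.ext_iff] using hxy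
      simp [sum_pi_single', hv₀]
  rw [fracDim, hres.fracKDim_eq fun g hg => ?_] <;> simp only [sum_pi_single', mem_univ, if_true]
  exact hg.le_sum

end Path

end FracDim

open FracDim in
/-- For the path `P₅` on 5 vertices, `dim_f^4(P₅) = 5`; in particular
`dim_f^4(P₅) = 5 > 4 = 4 · dim_f(P₅)`, so the inequality `dim_f^k(G) ≥ k · dim_f(G)`
can be strict. -/
theorem fracKDim_path_five :
    fracKDim (SimpleGraph.pathGraph 5) 4 = 5 ∧
      4 * fracDim (SimpleGraph.pathGraph 5) = 4 ∧
      4 * fracDim (SimpleGraph.pathGraph 5) < fracKDim (SimpleGraph.pathGraph 5) 4 := by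
  have hk : fracKDim (SimpleGraph.pathGraph 5) 4 = 5 := by
    simpa [show (5 : ℝ) - 1 = 4 by norm_num] using fracKDim_pathGraph (n := 5) (by norm_num)
  have h1 : fracDim (SimpleGraph.pathGraph 5) = 1 := fracDim_pathGraph (by norm_num)
  rw [hk, h1]
  norm_num
end

section
/- Let T be a tree with exactly one exterior major vertex v, and let ℓ_1, ℓ_2, …, ℓ_a (a ≥ 3) be the terminal vertices of v, ordered so that d(v,ℓ_1) ≤ d(v,ℓ_2) ≤ … ≤ d(v,ℓ_a). Then κ(T) = d(ℓ_1,ℓ_2), and if d(v,ℓ_1) = d(v,ℓ_2), then dim_f^k(T) = k·a/2 for every real number k with 1 ≤ k ≤ κ(T). -/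
open Finset

namespace FracDim

open scoped Classical

variable {V : Type*}

/-- A leaf is a vertex of degree one. -/
def IsLeaf [Fintype V] (G : SimpleGraph V) [DecidableRel G.Adj] (u : V) : Prop :=
  G.degree u = 1

/-- A major vertex is a vertex of degree at least three. -/
def IsMajor [Fintype V] (G : SimpleGraph V) [DecidableRel G.Adj] (v : V) : Prop :=
  3 ≤ G.degree v

/-- A leaf `u` is a terminal vertex of a major vertex `v` if `d(u,v) < d(u,w)` for every
other major vertex `w`. -/
def IsTerminalOf [Fintype V] (G : SimpleGraph V) [DecidableRel G.Adj] (u v : V) : Prop :=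
  IsLeaf G u ∧ IsMajor G v ∧ ∀ w, IsMajor G w → w ≠ v → G.dist u v < G.dist u w

/-- An exterior major vertex is a major vertex with at least one terminal vertex. -/
def IsExteriorMajor [Fintype V] (G : SimpleGraph V) [DecidableRel G.Adj] (v : V) : Prop :=
  IsMajor G v ∧ ∃ u, IsTerminalOf G u v

/-- The vertex set of the subtree `T_v`: `v` together with all vertices belonging to the
paths joining `v` with its terminal vertices (in a tree, `z` lies on the unique `v-u`
path iff `d(v,z) + d(z,u) = d(v,u)`). -/
def branchSet [Fintype V] (G : SimpleGraph V) [DecidableRel G.Adj] (v : V) : Set V :=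
  {z | z = v ∨ ∃ u, IsTerminalOf G u v ∧ G.dist v z + G.dist z u = G.dist v u}

/-- The terminal degree of a vertex: the number of its terminal vertices. -/
noncomputable def terDeg [Fintype V] (G : SimpleGraph V) [DecidableRel G.Adj] (v : V) : ℕ :=
  {u | IsTerminalOf G u v}.ncard

end FracDim

/-!
Every vertex of `T` other than `v` has degree at most two, so `T` is a spider: the geodesics from
`v` to the terminal vertices `ℓ i` (the legs) cover `T` and pairwise meet only at `v`. For `z` on
a leg, `d(x, z) = d(v, x) + d(v, z)` whenever `x` is not on that leg, so for `x ≠ y` the set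
`R{x,y}` contains two whole legs, while for the neighbours `x, y` of `v` on legs `i ≠ j` it is
contained in the union of these two legs. This gives `κ(T) = d(v, ℓ 0) + d(v, ℓ 1)`. Likewise a
`k`-resolving function has weight at least `k` on any two legs together, hence at least `k·a/2`
in total, and spreading `k/2` uniformly over the `n = d(v, ℓ 0)` vertices of each leg nearest to
`v` attains this bound once `k ≤ 2n = κ(T)`.
-/

namespace SimpleGraph

variable {V : Type*} {G : SimpleGraph V} {u w x y : V}

lemma Connected.exists_dist_eq_of_le (hG : G.Connected) {t : ℕ} (ht : t ≤ G.dist u w) :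
    ∃ x, G.dist u x = t ∧ G.dist u x + G.dist x w = G.dist u w := by
  obtain ⟨p, hp⟩ := hG.exists_walk_length_eq_dist u w
  have h₁ := dist_le (p.take t)
  have h₂ := dist_le (p.drop t)
  have h₃ : G.dist u w ≤ G.dist u (p.getVert t) + G.dist (p.getVert t) w := hG.dist_triangle
  simp only [Walk.take_length, Walk.drop_length] at h₁ h₂
  exact ⟨p.getVert t, by omega, by omega⟩

lemma Connected.exists_isPath_getVert_eq (hG : G.Connected)
    (hx : G.dist u x + G.dist x w = G.dist u w) :
    ∃ p : G.Walk u w, p.IsPath ∧ p.getVert (G.dist u x) = x := by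
  obtain ⟨p, hp⟩ := hG.exists_walk_length_eq_dist u x
  obtain ⟨q, hq⟩ := hG.exists_walk_length_eq_dist x w
  refine ⟨p.append q, (p.append q).isPath_of_length_eq_dist (by simp [hp, hq, hx]), ?_⟩
  simp [Walk.getVert_append', ← hp]

lemma IsTree.eq_of_dist_add_eq (hG : G.IsTree) (hx : G.dist u x + G.dist x w = G.dist u w)
    (hy : G.dist u y + G.dist y w = G.dist u w) (hxy : G.dist u x = G.dist u y) : x = y := by
  obtain ⟨p, hp, hpx⟩ := hG.connected.exists_isPath_getVert_eq hx
  obtain ⟨q, hq, hqy⟩ := hG.connected.exists_isPath_getVert_eq hy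
  have hpq : p = q := (hG.existsUnique_path u w).unique hp hq
  rw [← hpx, ← hqy, hpq, hxy]

lemma IsTree.dist_add_eq_of_le (hG : G.IsTree) (hx : G.dist u x + G.dist x w = G.dist u w)
    (hy : G.dist u y + G.dist y w = G.dist u w) (hyx : G.dist u y ≤ G.dist u x) :
    G.dist u y + G.dist y x = G.dist u x := by
  obtain ⟨y', hy'u, hy'x⟩ := hG.connected.exists_dist_eq_of_le hyx
  have h₁ : G.dist u w ≤ G.dist u y' + G.dist y' w := hG.connected.dist_triangle
  have h₂ : G.dist y' w ≤ G.dist y' x + G.dist x w := hG.connected.dist_triangle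
  obtain rfl : y' = y := hG.eq_of_dist_add_eq (w := w) (by omega) hy hy'u
  exact hy'x

lemma Connected.exists_adj_dist_add_one_eq (hG : G.Connected)
    (hx : G.dist u x + G.dist x w = G.dist u w) (hne : x ≠ u) :
    ∃ y, G.Adj y x ∧ G.dist u y + 1 = G.dist u x ∧ G.dist u y + G.dist y w = G.dist u w := by
  have hpos := hG.pos_dist_of_ne hne.symm
  obtain ⟨y, hyu, hyx⟩ := hG.exists_dist_eq_of_le (u := u) (w := x) (Nat.sub_le _ 1)
  have hadj : G.Adj y x := dist_eq_one_iff_adj.1 (by omega)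
  have h₁ : G.dist u w ≤ G.dist u y + G.dist y w := hG.dist_triangle
  have h₂ : G.dist y w ≤ G.dist y x + G.dist x w := hG.dist_triangle
  exact ⟨y, hadj, by omega, by omega⟩

lemma card_le_degree [Fintype (G.neighborSet x)] {s : Finset V} (hs : ∀ y ∈ s, G.Adj x y) :
    s.card ≤ G.degree x := by
  rw [← card_neighborFinset_eq_degree]
  exact Finset.card_le_card fun y hy => (mem_neighborFinset ..).2 (hs y hy)

lemma IsTree.exists_adj_dist_eq_add_one (hG : G.IsTree) [Fintype (G.neighborSet x)]
    (hx : 2 ≤ G.degree x) (u : V) : ∃ y, G.Adj x y ∧ G.dist u y = G.dist u x + 1 := by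
  rw [← card_neighborFinset_eq_degree] at hx
  obtain ⟨y₁, hy₁, y₂, hy₂, hne⟩ := Finset.one_lt_card.1 hx
  rw [mem_neighborFinset] at hy₁ hy₂
  have h₁ := hG.dist_eq_dist_add_one_of_adj u hy₁
  have h₂ := hG.dist_eq_dist_add_one_of_adj u hy₂
  rcases h₁ with h₁ | h₁
  · rcases h₂ with h₂ | h₂
    · have hd₁ : G.dist y₁ x = 1 := dist_eq_one_iff_adj.2 hy₁.symm
      have hd₂ : G.dist y₂ x = 1 := dist_eq_one_iff_adj.2 hy₂.symm
      exact absurd (hG.eq_of_dist_add_eq (u := u) (w := x) (by omega) (by omega) (by omega)) hne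
    · exact ⟨y₂, hy₂, h₂⟩
  · exact ⟨y₁, hy₁, h₁⟩

end SimpleGraph

namespace FracDim

open SimpleGraph

section Leaves

variable {V : Type*} [Fintype V] {G : SimpleGraph V} [DecidableRel G.Adj] {u v w z : V}

lemma IsLeaf.eq_of_adj {x y : V} (hu : IsLeaf G u) (hx : G.Adj u x) (hy : G.Adj u y) : x = y := by
  classical
  have := card_le_degree (G := G) (x := u) (s := {x, y}) (by simp [hx, hy])
  unfold IsLeaf at hu
  by_contra hxy
  rw [Finset.card_pair hxy] at this
  omega

lemma exists_isLeaf_dist_add_eq (hG : G.IsTree) (hz : z ≠ v) :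
    ∃ u, IsLeaf G u ∧ G.dist v z + G.dist z u = G.dist v u := by
  classical
  -- a vertex beyond `z` farthest from `v` is a leaf
  obtain ⟨u, hu, hmax⟩ := Finset.exists_max_image
    (univ.filter fun u => G.dist v z + G.dist z u = G.dist v u) (G.dist v) ⟨z, by simp⟩
  rw [Finset.mem_filter] at hu
  refine ⟨u, ?_, hu.2⟩
  have hvu : 0 < G.dist v u := by have := hG.connected.pos_dist_of_ne hz.symm; omega
  have huv : u ≠ v := fun h => by simp [h] at hvu
  obtain ⟨y, hyu, -⟩ := hG.connected.exists_adj_dist_add_one_eq (w := u) (by simp) huv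
  have hpos : 0 < G.degree u := (G.degree_pos_iff_exists_adj u).2 ⟨y, hyu.symm⟩
  by_contra hleaf
  obtain ⟨y, hadj, hy⟩ :=
    hG.exists_adj_dist_eq_add_one (x := u) (by unfold IsLeaf at hleaf; omega) v
  have h₁ : G.dist z y ≤ G.dist z u + G.dist u y := hG.connected.dist_triangle
  have h₂ : G.dist v y ≤ G.dist v z + G.dist z y := hG.connected.dist_triangle
  have h₃ : G.dist u y = 1 := dist_eq_one_iff_adj.2 hadj
  have := hmax y (Finset.mem_filter.2 ⟨Finset.mem_univ y, by omega⟩)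
  omega

lemma eq_of_isMajor (hG : G.IsTree) (huniq : ∀ w, IsExteriorMajor G w → w = v)
    (hw : IsMajor G w) : w = v := by
  classical
  obtain ⟨m, hm, hmax⟩ := Finset.exists_max_image (univ.filter (IsMajor G)) (G.dist v)
    ⟨w, by simpa⟩
  rw [Finset.mem_filter] at hm
  -- a major vertex farthest from `v` other than `v` would be exterior
  have hmv : m = v := by
    by_contra hmv
    obtain ⟨u, hu, hvmu⟩ := exists_isLeaf_dist_add_eq hG hmv
    refine hmv (huniq m ⟨hm.2, u, hu, hm.2, fun x hx hxm => ?_⟩)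
    by_contra! hle
    have h₁ := hmax x (by simpa)
    have h₂ : G.dist v u ≤ G.dist v x + G.dist x u := hG.connected.dist_triangle
    rw [dist_comm (u := u), dist_comm (u := u)] at hle
    exact hxm (hG.eq_of_dist_add_eq (w := u) (by omega) hvmu (by omega))
  have := hmax w (by simpa)
  rw [hmv, dist_self, Nat.le_zero, hG.connected.dist_eq_zero_iff] at this
  exact this.symm

lemma dist_add_dist_eq_of_isLeaf {u₁ u₂ : V} (hG : G.IsTree) (hmaj : ∀ w, IsMajor G w → w = v)
    (h₁ : IsLeaf G u₁) (h₂ : IsLeaf G u₂) (hne : u₁ ≠ u₂) :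
    G.dist u₁ v + G.dist v u₂ = G.dist u₁ u₂ := by
  classical
  have hc := hG.connected
  obtain ⟨m, hm, hmin⟩ := Finset.exists_min_image
    (univ.filter fun x => G.dist u₁ x + G.dist x u₂ = G.dist u₁ u₂) (G.dist v) ⟨u₁, by simp⟩
  rw [Finset.mem_filter] at hm
  suffices m = v from this ▸ hm.2
  -- The neighbour `m'` of `m` towards `v` is off the `u₁`-`u₂` geodesic, while the neighbours of
  -- `m` along it are on it; so `m` is a leaf with two neighbours or a major vertex other than `v`.
  by_contra hmv
  obtain ⟨m', hm'm, hm'v, -⟩ := hc.exists_adj_dist_add_one_eq (w := m) (by simp) hmv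
  have hm'_off : G.dist u₁ m' + G.dist m' u₂ ≠ G.dist u₁ u₂ := fun hB => by
    have := hmin m' (by simpa using hB)
    omega
  have towards₁ : m ≠ u₁ → ∃ p, G.Adj m p ∧ p ≠ m' ∧ G.dist u₁ p + 1 = G.dist u₁ m := by
    intro h
    obtain ⟨p, hpm, hpd, hpB⟩ := hc.exists_adj_dist_add_one_eq hm.2 h
    exact ⟨p, hpm.symm, by rintro rfl; exact hm'_off hpB, hpd⟩
  have towards₂ : m ≠ u₂ → ∃ p, G.Adj m p ∧ p ≠ m' ∧ G.dist u₁ m + 1 = G.dist u₁ p := by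
    intro h
    obtain ⟨p, hpm, hpd, hpB⟩ := hc.exists_adj_dist_add_one_eq (u := u₂) (w := u₁)
      (by rw [dist_comm, add_comm, dist_comm (u := m), hm.2, dist_comm]) h
    have hB : G.dist u₁ p + G.dist p u₂ = G.dist u₁ u₂ := by
      rw [dist_comm (u := p), dist_comm (u := u₁) (v := p), add_comm, hpB, dist_comm]
    refine ⟨p, hpm.symm, by rintro rfl; exact hm'_off hB, ?_⟩
    have c₁ : G.dist p u₂ = G.dist u₂ p := dist_comm
    have c₂ : G.dist m u₂ = G.dist u₂ m := dist_comm
    omega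
  rcases eq_or_ne m u₁ with rfl | hmu₁
  · obtain ⟨p, hp, hpm', -⟩ := towards₂ hne
    exact hpm' (h₁.eq_of_adj hp hm'm.symm)
  rcases eq_or_ne m u₂ with rfl | hmu₂
  · obtain ⟨p, hp, hpm', -⟩ := towards₁ hmu₁
    exact hpm' (h₂.eq_of_adj hp hm'm.symm)
  obtain ⟨p₁, hp₁, hp₁m', hp₁d⟩ := towards₁ hmu₁
  obtain ⟨p₂, hp₂, hp₂m', hp₂d⟩ := towards₂ hmu₂
  have hp₁₂ : p₁ ≠ p₂ := by rintro rfl; omega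
  have hdeg := card_le_degree (G := G) (x := m) (s := {m', p₁, p₂})
    (by simp [hm'm.symm, hp₁, hp₂])
  rw [Finset.card_eq_three.2 ⟨m', p₁, p₂, hp₁m'.symm, hp₂m'.symm, hp₁₂, rfl⟩] at hdeg
  exact hmv (hmaj m hdeg)

end Leaves

variable {V ι : Type*} [Fintype V] {G : SimpleGraph V} {u v x y z : V}

open Classical in
noncomputable def leg (G : SimpleGraph V) (v u : V) : Finset V :=
  univ.filter fun z => z ≠ v ∧ G.dist v z + G.dist z u = G.dist v u

lemma mem_leg : z ∈ leg G v u ↔ z ≠ v ∧ G.dist v z + G.dist z u = G.dist v u := by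
  simp [leg]

lemma card_filter_leg (hG : G.IsTree) {n : ℕ} (hn : n ≤ G.dist v u) :
    ((leg G v u).filter (G.dist v · ≤ n)).card = n := by
  calc _ = (Icc 1 n).card := by
        refine Finset.card_bij (fun z _ => G.dist v z) (fun z hz => ?_) (fun z hz y hy hzy => ?_)
          (fun t ht => ?_)
        · rw [Finset.mem_filter, mem_leg] at hz
          exact Finset.mem_Icc.2 ⟨hG.connected.pos_dist_of_ne hz.1.1.symm, hz.2⟩
        · rw [Finset.mem_filter, mem_leg] at hz hy
          exact hG.eq_of_dist_add_eq hz.1.2 hy.1.2 hzy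
        · obtain ⟨ht₁, htn⟩ := Finset.mem_Icc.1 ht
          obtain ⟨z, rfl, hz⟩ := hG.connected.exists_dist_eq_of_le (htn.trans hn)
          refine ⟨z, Finset.mem_filter.2 ⟨mem_leg.2 ⟨?_, hz⟩, htn⟩, rfl⟩
          rintro rfl
          simp at ht₁
    _ = n := by simp

lemma card_leg (hG : G.IsTree) : (leg G v u).card = G.dist v u := by
  rw [← card_filter_leg hG le_rfl, Finset.filter_true_of_mem]
  intro z hz
  have := (mem_leg.1 hz).2
  omega

lemma dist_lt_add_of_mem_leg (hG : G.IsTree) (hx : x ∈ leg G v u) (hz : z ∈ leg G v u) :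
    G.dist x z < G.dist v x + G.dist v z := by
  rw [mem_leg] at hx hz
  have hx₀ := hG.connected.pos_dist_of_ne hx.1.symm
  have hz₀ := hG.connected.pos_dist_of_ne hz.1.symm
  have hxz : G.dist x z = G.dist z x := dist_comm
  rcases le_total (G.dist v z) (G.dist v x) with h | h
  · have := hG.dist_add_eq_of_le hx.2 hz.2 h
    omega
  · have := hG.dist_add_eq_of_le hz.2 hx.2 h
    omega

lemma exists_mem_leg_dist_eq_one (hG : G.Connected) (hu : u ≠ v) :
    ∃ x ∈ leg G v u, G.dist v x = 1 := by
  obtain ⟨x, hx₁, hx⟩ := hG.exists_dist_eq_of_le (hG.pos_dist_of_ne hu.symm)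
  exact ⟨x, mem_leg.2 ⟨by rintro rfl; simp at hx₁, hx⟩, hx₁⟩

lemma resSet_comm : resSet G x y = resSet G y x := by
  ext z
  simp [resSet, eq_comm]

lemma mul_div_two_le_sum_of_le_add {a : ℕ} (ha : 2 ≤ a) {s : Fin a → ℝ} {k : ℝ}
    (h : ∀ i j, i ≠ j → k ≤ s i + s j) : k * a / 2 ≤ ∑ i, s i := by
  have hrot (i : Fin a) : finRotate a i ≠ i :=
    Equiv.Perm.mem_support.1 (by simp [support_finRotate_of_le ha])
  have := Finset.sum_le_sum fun i (_ : i ∈ univ) => h (finRotate a i) i (hrot i)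
  rw [Finset.sum_add_distrib, Equiv.sum_comp, Finset.sum_const, Finset.card_univ,
    Fintype.card_fin, nsmul_eq_mul] at this
  linarith

/-- `G` is a spider with centre `v` and feet `ℓ i`: a tree covered by the geodesics from `v`
to the feet, any two of which meet only at `v`. -/
structure IsSpider (G : SimpleGraph V) (v : V) (ℓ : ι → V) : Prop where
  isTree : G.IsTree
  ne_center : ∀ i, ℓ i ≠ v
  dist_add_dist : ∀ i j, i ≠ j → G.dist (ℓ i) v + G.dist v (ℓ j) = G.dist (ℓ i) (ℓ j)
  exists_mem_leg : ∀ z, z ≠ v → ∃ i, z ∈ leg G v (ℓ i)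

lemma isSpider_of_isTerminalOf [DecidableRel G.Adj] {ℓ : ι → V} (hG : G.IsTree)
    (hv : IsMajor G v) (huniq : ∀ w, IsExteriorMajor G w → w = v) (hinj : Function.Injective ℓ)
    (hterm : ∀ i, IsTerminalOf G (ℓ i) v) (hall : ∀ u, IsTerminalOf G u v → ∃ i, ℓ i = u) :
    IsSpider G v ℓ where
  isTree := hG
  ne_center i h := by
    have hleaf : G.degree (ℓ i) = 1 := (hterm i).1
    have hmajor : 3 ≤ G.degree v := hv
    rw [h] at hleaf
    omega
  dist_add_dist i j hij :=
    dist_add_dist_eq_of_isLeaf hG (fun _ => eq_of_isMajor hG huniq) (hterm i).1 (hterm j).1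
      (hinj.ne hij)
  exists_mem_leg z hz := by
    obtain ⟨u, hu, hzu⟩ := exists_isLeaf_dist_add_eq hG hz
    obtain ⟨i, rfl⟩ := hall u ⟨hu, hv, fun w hw hwv => absurd (eq_of_isMajor hG huniq hw) hwv⟩
    exact ⟨i, mem_leg.2 ⟨hz, hzu⟩⟩

namespace IsSpider

section

variable {ℓ : ι → V} {i j : ι} {k : ℝ} (S : IsSpider G v ℓ)
include S

lemma dist_eq_add_of_mem_leg (hij : i ≠ j) (hz : z ∈ leg G v (ℓ i)) (hy : y ∈ leg G v (ℓ j)) :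
    G.dist z y = G.dist v z + G.dist v y := by
  have hc := S.isTree.connected
  have h₁ : G.dist (ℓ i) (ℓ j) ≤ G.dist (ℓ i) z + G.dist z (ℓ j) := hc.dist_triangle
  have h₂ : G.dist z (ℓ j) ≤ G.dist z y + G.dist y (ℓ j) := hc.dist_triangle
  have h₃ : G.dist z y ≤ G.dist z v + G.dist v y := hc.dist_triangle
  have c₁ : G.dist (ℓ i) z = G.dist z (ℓ i) := dist_comm
  have c₂ : G.dist z v = G.dist v z := dist_comm
  have c₃ : G.dist (ℓ i) v = G.dist v (ℓ i) := dist_comm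
  have := S.dist_add_dist i j hij
  rw [mem_leg] at hz hy
  omega

lemma disjoint_leg (hij : i ≠ j) : Disjoint (leg G v (ℓ i)) (leg G v (ℓ j)) := by
  refine Finset.disjoint_left.2 fun z hzi hzj => ?_
  have h := S.dist_eq_add_of_mem_leg hij hzi hzj
  have := S.isTree.connected.pos_dist_of_ne (mem_leg.1 hzi).1.symm
  rw [SimpleGraph.dist_self] at h
  omega

lemma dist_eq_add_of_notMem_leg (hx : x ∉ leg G v (ℓ i)) (hz : z ∈ leg G v (ℓ i)) :
    G.dist x z = G.dist v x + G.dist v z := by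
  rcases eq_or_ne x v with rfl | hxv
  · simp
  obtain ⟨j, hxj⟩ := S.exists_mem_leg x hxv
  exact S.dist_eq_add_of_mem_leg (by rintro rfl; exact hx hxj) hxj hz

lemma leg_subset_resSet_of_notMem (hx : x ∉ leg G v (ℓ i)) (hy : y ∉ leg G v (ℓ i))
    (hxy : G.dist v x ≠ G.dist v y) : leg G v (ℓ i) ⊆ resSet G x y := by
  intro z hz
  simp only [resSet, Finset.mem_filter, Finset.mem_univ, true_and,
    S.dist_eq_add_of_notMem_leg hx hz, S.dist_eq_add_of_notMem_leg hy hz]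
  omega

lemma leg_subset_resSet_of_mem (hx : x ∈ leg G v (ℓ i)) (hy : y ∉ leg G v (ℓ i))
    (hxy : G.dist v x ≤ G.dist v y) : leg G v (ℓ i) ⊆ resSet G x y := by
  intro z hz
  have := dist_lt_add_of_mem_leg S.isTree hx hz
  simp only [resSet, Finset.mem_filter, Finset.mem_univ, true_and,
    S.dist_eq_add_of_notMem_leg hy hz]
  omega

lemma resSet_subset_union_leg [DecidableEq V] (hx : x ∈ leg G v (ℓ i)) (hy : y ∈ leg G v (ℓ j))
    (hx₁ : G.dist v x = 1) (hy₁ : G.dist v y = 1) :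
    resSet G x y ⊆ leg G v (ℓ i) ∪ leg G v (ℓ j) := by
  intro z hz
  by_contra hzij
  rw [Finset.mem_union, not_or] at hzij
  have hxz := S.dist_eq_add_of_notMem_leg hzij.1 hx
  have hyz := S.dist_eq_add_of_notMem_leg hzij.2 hy
  rw [dist_comm] at hxz hyz
  simp only [resSet, Finset.mem_filter, Finset.mem_univ, true_and] at hz
  omega

lemma exists_legs_subset_resSet [Fintype ι] (hι : 3 ≤ Fintype.card ι) (hxy : x ≠ y) :
    ∃ p q, p ≠ q ∧ leg G v (ℓ p) ⊆ resSet G x y ∧ leg G v (ℓ q) ⊆ resSet G x y := by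
  wlog hle : G.dist v x ≤ G.dist v y generalizing x y
  · obtain ⟨p, q, hpq, hp, hq⟩ := this hxy.symm (le_of_not_ge hle)
    rw [resSet_comm] at hp hq
    exact ⟨p, q, hpq, hp, hq⟩
  have hc := S.isTree.connected
  have hthird : ∀ i j : ι, ∃ m, m ≠ i ∧ m ≠ j := ENat.exists_ne_ne_of_three_le (by simpa using hι)
  have hyv : y ≠ v := by
    rintro rfl
    rw [SimpleGraph.dist_self, Nat.le_zero, hc.dist_eq_zero_iff] at hle
    exact hxy hle.symm
  obtain ⟨j, hyj⟩ := S.exists_mem_leg y hyv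
  have hy_notMem : ∀ {m}, m ≠ j → y ∉ leg G v (ℓ m) := fun hmj hym =>
    Finset.disjoint_left.1 (S.disjoint_leg hmj) hym hyj
  by_cases hxi : ∃ i ≠ j, x ∈ leg G v (ℓ i)
  · obtain ⟨i, hij, hxi⟩ := hxi
    have hi := S.leg_subset_resSet_of_mem hxi (hy_notMem hij) hle
    rcases eq_or_lt_of_le hle with heq | hlt
    · have hxj : x ∉ leg G v (ℓ j) := Finset.disjoint_left.1 (S.disjoint_leg hij) hxi
      refine ⟨i, j, hij, hi, ?_⟩
      rw [resSet_comm]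
      exact S.leg_subset_resSet_of_mem hyj hxj heq.ge
    · obtain ⟨m, hmi, hmj⟩ := hthird i j
      have hxm : x ∉ leg G v (ℓ m) := fun hxm =>
        Finset.disjoint_left.1 (S.disjoint_leg hmi) hxm hxi
      exact ⟨i, m, hmi.symm, hi, S.leg_subset_resSet_of_notMem hxm (hy_notMem hmj) hlt.ne⟩
  · push Not at hxi
    have hlt : G.dist v x ≠ G.dist v y := by
      intro heq
      rcases eq_or_ne x v with rfl | hxv
      · exact hyv (hc.dist_eq_zero_iff.1 (by simpa using heq.symm)).symm
      obtain ⟨i, hxi'⟩ := S.exists_mem_leg x hxv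
      obtain rfl : i = j := by_contra fun hij => hxi i hij hxi'
      exact hxy (S.isTree.eq_of_dist_add_eq (mem_leg.1 hxi').2 (mem_leg.1 hyj).2 heq)
    obtain ⟨p, hpj, -⟩ := hthird j j
    obtain ⟨q, hqp, hqj⟩ := hthird p j
    exact ⟨p, q, hqp.symm,
      S.leg_subset_resSet_of_notMem (hxi p hpj) (hy_notMem hpj) hlt,
      S.leg_subset_resSet_of_notMem (hxi q hqj) (hy_notMem hqj) hlt⟩

lemma le_card_resSet [Fintype ι] (hι : 3 ≤ Fintype.card ι) {N : ℕ}
    (hN : ∀ p q, p ≠ q → N ≤ G.dist v (ℓ p) + G.dist v (ℓ q)) {x y : V} (hxy : x ≠ y) :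
    N ≤ (resSet G x y).card := by
  classical
  obtain ⟨p, q, hpq, hp, hq⟩ := S.exists_legs_subset_resSet hι hxy
  calc N ≤ (leg G v (ℓ p)).card + (leg G v (ℓ q)).card := by
        rw [card_leg S.isTree, card_leg S.isTree]
        exact hN p q hpq
    _ = (leg G v (ℓ p) ∪ leg G v (ℓ q)).card :=
        (Finset.card_union_of_disjoint (S.disjoint_leg hpq)).symm
    _ ≤ (resSet G x y).card := Finset.card_le_card (Finset.union_subset hp hq)

lemma exists_resSet_subset_union_leg [DecidableEq V] (hij : i ≠ j) :
    ∃ x y, x ≠ y ∧ resSet G x y ⊆ leg G v (ℓ i) ∪ leg G v (ℓ j) := by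
  obtain ⟨x, hx, hx₁⟩ := exists_mem_leg_dist_eq_one S.isTree.connected (S.ne_center i)
  obtain ⟨y, hy, hy₁⟩ := exists_mem_leg_dist_eq_one S.isTree.connected (S.ne_center j)
  exact ⟨x, y, fun hxy => Finset.disjoint_left.1 (S.disjoint_leg hij) hx (hxy ▸ hy),
    S.resSet_subset_union_leg hx hy hx₁ hy₁⟩

lemma kappa_eq [Fintype ι] (hι : 3 ≤ Fintype.card ι) (hij : i ≠ j)
    (hmin : ∀ p q, p ≠ q → G.dist v (ℓ i) + G.dist v (ℓ j) ≤ G.dist v (ℓ p) + G.dist v (ℓ q)) :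
    kappa G = G.dist v (ℓ i) + G.dist v (ℓ j) := by
  classical
  obtain ⟨x, y, hxy, hsub⟩ := S.exists_resSet_subset_union_leg hij
  have hle : (resSet G x y).card ≤ G.dist v (ℓ i) + G.dist v (ℓ j) := by
    rw [← card_leg S.isTree, ← card_leg S.isTree]
    exact (Finset.card_le_card hsub).trans (Finset.card_union_le _ _)
  refine IsLeast.csInf_eq ⟨⟨x, y, hxy, le_antisymm hle (S.le_card_resSet hι hmin hxy)⟩, ?_⟩
  rintro n ⟨x, y, hxy, rfl⟩
  exact S.le_card_resSet hι hmin hxy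

lemma le_sum_leg_add_sum_leg {g : V → ℝ} (hg : IsKResolving G k g) (hij : i ≠ j) :
    k ≤ ∑ z ∈ leg G v (ℓ i), g z + ∑ z ∈ leg G v (ℓ j), g z := by
  classical
  obtain ⟨x, y, hxy, hsub⟩ := S.exists_resSet_subset_union_leg hij
  rw [← Finset.sum_union (S.disjoint_leg hij)]
  exact (hg.2 x y hxy).trans
    (Finset.sum_le_sum_of_subset_of_nonneg hsub fun z _ _ => (hg.1 z).1)

lemma sum_eq_add_sum_sum_leg [Fintype ι] {M : Type*} [AddCommMonoid M] (g : V → M) :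
    ∑ z, g z = g v + ∑ i, ∑ z ∈ leg G v (ℓ i), g z := by
  classical
  have huniv : (univ : Finset V) = insert v (univ.biUnion fun i => leg G v (ℓ i)) := by
    ext z
    rcases eq_or_ne z v with rfl | hz
    · simp
    · simpa [hz] using S.exists_mem_leg z hz
  rw [huniv, Finset.sum_insert (by simp [mem_leg]),
    Finset.sum_biUnion fun i _ j _ hij => S.disjoint_leg hij]

end

section

variable {a : ℕ} {ℓ : Fin a → V} {k : ℝ} (S : IsSpider G v ℓ)
include S

lemma mul_div_two_le_sum (ha : 2 ≤ a) {g : V → ℝ} (hg : IsKResolving G k g) :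
    k * a / 2 ≤ ∑ z, g z := by
  rw [S.sum_eq_add_sum_sum_leg]
  exact (mul_div_two_le_sum_of_le_add ha fun i j hij => S.le_sum_leg_add_sum_leg hg hij).trans
    (le_add_of_nonneg_left (hg.1 v).1)

lemma exists_isKResolving_sum_eq (ha : 3 ≤ a) {n : ℕ} (hn : ∀ i, n ≤ G.dist v (ℓ i))
    (hk₀ : 0 < k) (hk : k ≤ 2 * n) :
    ∃ g, IsKResolving G k g ∧ ∑ z, g z = k * a / 2 := by
  classical
  have hn₀ : (0 : ℝ) < n := by linarith
  set g : V → ℝ := fun z => if z ≠ v ∧ G.dist v z ≤ n then k / (2 * n) else 0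
  have hg₀ (z : V) : 0 ≤ g z := by positivity
  have hleg (i : Fin a) : ∑ z ∈ leg G v (ℓ i), g z = k / 2 := by
    calc ∑ z ∈ leg G v (ℓ i), g z
        = ∑ z ∈ leg G v (ℓ i), if G.dist v z ≤ n then k / (2 * n) else 0 :=
          Finset.sum_congr rfl fun z hz => by simp [g, (mem_leg.1 hz).1]
      _ = n * (k / (2 * n)) := by
          rw [← Finset.sum_filter, Finset.sum_const, card_filter_leg S.isTree (hn i),
            nsmul_eq_mul]
      _ = k / 2 := by field_simp
  refine ⟨g, ⟨fun z => ⟨hg₀ z, ?_⟩, fun x y hxy => ?_⟩, ?_⟩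
  · dsimp only [g]
    split_ifs
    · rw [div_le_one (by positivity)]
      exact hk
    · exact zero_le_one
  · obtain ⟨p, q, hpq, hp, hq⟩ := S.exists_legs_subset_resSet (by simpa using ha) hxy
    calc k = ∑ z ∈ leg G v (ℓ p) ∪ leg G v (ℓ q), g z := by
          rw [Finset.sum_union (S.disjoint_leg hpq), hleg, hleg]
          ring
      _ ≤ ∑ z ∈ resSet G x y, g z :=
          Finset.sum_le_sum_of_subset_of_nonneg (Finset.union_subset hp hq) fun z _ _ => hg₀ z
  · rw [S.sum_eq_add_sum_sum_leg, Finset.sum_congr rfl fun i _ => hleg i, Finset.sum_const,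
      Finset.card_univ, Fintype.card_fin, nsmul_eq_mul, show g v = 0 by simp [g]]
    ring

lemma fracKDim_eq (ha : 3 ≤ a) {n : ℕ} (hn : ∀ i, n ≤ G.dist v (ℓ i)) (hk₀ : 0 < k)
    (hk : k ≤ 2 * n) : fracKDim G k = k * a / 2 := by
  obtain ⟨g, hg, hsum⟩ := S.exists_isKResolving_sum_eq ha hn hk₀ hk
  refine IsLeast.csInf_eq ⟨⟨g, hg, hsum.symm⟩, ?_⟩
  rintro s ⟨g, hg, rfl⟩
  exact S.mul_div_two_le_sum (by omega) hg

end

end IsSpider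

end FracDim

open FracDim in
/-- Let `T` be a tree with exactly one exterior major vertex `v`, and let
`ℓ 0, …, ℓ (a-1)` (`a ≥ 3`) enumerate the terminal vertices of `v`, ordered so that
`d(v, ℓ i)` is monotone. Then `κ(T) = d(ℓ 0, ℓ 1)`, and if `d(v, ℓ 0) = d(v, ℓ 1)` then
`dim_f^k(T) = k·a/2` for every real `k` with `1 ≤ k ≤ κ(T)`. -/
theorem fracKDim_tree_one_exterior_eq {V : Type*} [Fintype V] (G : SimpleGraph V)
    [DecidableRel G.Adj] (hT : G.IsTree)
    (v : V) (hv : IsExteriorMajor G v) (huniq : ∀ w, IsExteriorMajor G w → w = v)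
    (a : ℕ) (ha : 3 ≤ a) (ℓ : Fin a → V) (hinj : Function.Injective ℓ)
    (hterm : ∀ i, IsTerminalOf G (ℓ i) v)
    (hall : ∀ u, IsTerminalOf G u v → ∃ i, ℓ i = u)
    (hmono : ∀ i j : Fin a, i ≤ j → G.dist v (ℓ i) ≤ G.dist v (ℓ j)) :
    kappa G = G.dist (ℓ ⟨0, by omega⟩) (ℓ ⟨1, by omega⟩) ∧
      (G.dist v (ℓ ⟨0, by omega⟩) = G.dist v (ℓ ⟨1, by omega⟩) →
        ∀ k : ℝ, 1 ≤ k → k ≤ (kappa G : ℝ) →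
          fracKDim G k = k * (a : ℝ) / 2) := by
  have S := isSpider_of_isTerminalOf hT hv.1 huniq hinj hterm hall
  set i₀ : Fin a := ⟨0, by omega⟩
  set i₁ : Fin a := ⟨1, by omega⟩
  have h01 : i₀ ≠ i₁ := by simp [i₀, i₁, Fin.ext_iff]
  have hi₀ (p : Fin a) : G.dist v (ℓ i₀) ≤ G.dist v (ℓ p) := hmono _ _ (Fin.le_def.2 p.val.zero_le)
  have hi₁ (p : Fin a) (hp : p ≠ i₀) : G.dist v (ℓ i₁) ≤ G.dist v (ℓ p) :=
    hmono _ _ (Fin.le_def.2 (Nat.one_le_iff_ne_zero.2 fun h => hp (Fin.ext h)))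
  have hκ : kappa G = G.dist v (ℓ i₀) + G.dist v (ℓ i₁) := by
    refine S.kappa_eq (by simpa) h01 fun p q hpq => ?_
    rcases eq_or_ne q i₀ with hq | hq
    · rw [hq]
      linarith [hi₁ p (hq ▸ hpq)]
    · linarith [hi₀ p, hi₁ q hq]
  refine ⟨by rw [hκ, ← S.dist_add_dist i₀ i₁ h01, G.dist_comm], ?_⟩
  intro hd k hk₁ hk
  rw [hκ, ← hd] at hk
  exact S.fracKDim_eq ha hi₀ (by linarith) (by push_cast at hk; linarith)
end
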